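/- Existence and uniqueness of the formal reproducing kernel Hilbert space of a positive kernel: let K : ℤ^d × ℤ^d → L(F) be a positive kernel. Then there exist a complex Hilbert space G and a family of bounded operators ρ_n : G → F (n ∈ ℤ^d) which is separating (the intersection of the kernels of all ρ_n is {0}) and satisfies ρ_n ∘ ρ_m^* = K(n, m) for all n, m ∈ ℤ^d. Moreover such data are unique up to unitary equivalence: if (G', (ρ'_n)) is another pair with (ρ'_n) separating and ρ'_n ∘ (ρ'_m)^* = K(n, m) for all n, m, then there exists a unitary operator V : G → G' with ρ'_n ∘ V = ρ_n for all n ∈ ℤ^d. -/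

import Mathlib

/-!
Positivity of `K` says that the sesquilinear form `∑ ⟪K n m (u m), v n⟫` on finitely supported
`u, v : ℤ^d →₀ F` is nonnegative; over `ℂ` polarization makes it Hermitian, so `K` is a positive
semidefinite operator matrix and Moore's construction `RKHS.OfKernel` realizes it, the
coefficient evaluations being the adjoints of the kernel functions.

For uniqueness, the synthesis operators `u ↦ ∑ ρ_m* (u m)` of two realizations have dense range
(by separation) and equal norms, since `⟪∑ ρ_n* a_n, ∑ ρ_m* b_m⟫ = ∑ ⟪a_n, ρ_n ρ_m* b_m⟫` only
sees the kernel. Hence `∑ ρ_m* (u m) ↦ ∑ ρ'_m* (u m)` extends to a unitary, and it intertwines the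
evaluations because `ρ_n (∑ ρ_m* (u m)) = ∑ K(n, m) (u m)` on both sides.
-/

open ContinuousLinearMap
open scoped ComplexOrder

universe u

/-- An operator-valued kernel `K : ℤ^d × ℤ^d → L(F)` is a positive kernel if
`∑_{n,m} ⟨K(n,m) u(m), u(n)⟩ ≥ 0` for every finitely supported `u : ℤ^d → F`. -/
def IsPosKernel {d : ℕ} {F : Type u} [NormedAddCommGroup F] [InnerProductSpace ℂ F]
    (K : (Fin d → ℤ) → (Fin d → ℤ) → F →L[ℂ] F) : Prop :=
  ∀ u : (Fin d → ℤ) →₀ F,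
    0 ≤ ∑ n ∈ u.support, ∑ m ∈ u.support, (inner ℂ (K n m (u m)) (u n) : ℂ)

open scoped InnerProductSpace

theorem LinearMap.IsNonneg.isSymm {M : Type*} [AddCommGroup M] [Module ℂ M]
    {B : M →ₗ⋆[ℂ] M →ₗ[ℂ] ℂ} (hB : B.IsNonneg) : B.IsSymm := by
  have hreal : ∀ x, starRingEnd ℂ (B x x) = B x x := fun x =>
    Complex.conj_eq_iff_im.mpr (Complex.nonneg_iff.mp (hB.nonneg x)).2.symm
  refine LinearMap.isSymm_def.mpr fun x y => ?_
  have h₁ := hreal (x + y)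
  have h₂ := hreal (x + Complex.I • y)
  simp only [map_add, map_smulₛₗ, LinearMap.add_apply, LinearMap.smul_apply, smul_eq_mul,
    map_mul, map_neg, Complex.conj_I, neg_neg, RingHom.id_apply, hreal] at h₁ h₂
  linear_combination (h₁ + Complex.I * h₂) / 2 +
    (starRingEnd ℂ (B x y) - starRingEnd ℂ (B y x) + B x y - B y x) / 2 * Complex.I_sq

section KernelForm

variable {ι F : Type*} [NormedAddCommGroup F] [InnerProductSpace ℂ F]

noncomputable def kernelForm (K : ι → ι → F →L[ℂ] F) : (ι →₀ F) →ₗ⋆[ℂ] (ι →₀ F) →ₗ[ℂ] ℂ :=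
  LinearMap.mk₂'ₛₗ (starRingEnd ℂ) (RingHom.id ℂ)
    (fun u v => v.sum fun n b => u.sum fun m a => ⟪K n m a, b⟫_ℂ)
    (fun u u' v => by simp [Finsupp.sum_add_index', Finsupp.sum_add])
    (fun c u v => by
      simp only [Finsupp.sum_smul_index', map_smul, inner_smul_left, map_zero, inner_zero_left,
        implies_true, smul_eq_mul]
      simp only [Finsupp.sum, Finset.mul_sum])
    (fun u v v' => by simp [Finsupp.sum_add_index', Finsupp.sum_add])
    (fun c u v => by
      simp only [Finsupp.sum_smul_index', inner_smul_right, inner_zero_right,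
        Finsupp.sum_fun_zero, implies_true, RingHom.id_apply, smul_eq_mul]
      simp only [Finsupp.sum, Finset.mul_sum])

theorem kernelForm_single_single (K : ι → ι → F →L[ℂ] F) (m n : ι) (a b : F) :
    kernelForm K (Finsupp.single m a) (Finsupp.single n b) = ⟪K n m a, b⟫_ℂ := by
  simp [kernelForm]

theorem adjoint_eq_of_isSymm_kernelForm [CompleteSpace F] {K : ι → ι → F →L[ℂ] F}
    (hK : (kernelForm K).IsSymm) (n m : ι) :
    adjoint (K n m) = K m n := by
  refine ((eq_adjoint_iff _ _).mpr fun a b => ?_).symm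
  rw [← kernelForm_single_single, ← hK.eq, kernelForm_single_single, inner_conj_symm]

theorem posSemidef_of_isNonneg_kernelForm [CompleteSpace F] {K : ι → ι → F →L[ℂ] F}
    (hK : (kernelForm K).IsNonneg) : (Matrix.of K).PosSemidef := by
  refine ((RKHS.posSemidef_tfae (K := Matrix.of K)).out 2 0).mp ?_
  refine ⟨?_, fun u => ?_⟩
  · ext1 n m
    rw [Matrix.conjTranspose_apply, star_eq_adjoint]
    exact adjoint_eq_of_isSymm_kernelForm hK.isSymm m n
  · rw [Finsupp.sum_comm]
    exact (Complex.nonneg_iff.mp (hK.nonneg u)).1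

end KernelForm

theorem IsPosKernel.isNonneg_kernelForm {d : ℕ} {F : Type*} [NormedAddCommGroup F]
    [InnerProductSpace ℂ F] {K : (Fin d → ℤ) → (Fin d → ℤ) → F →L[ℂ] F} (hK : IsPosKernel K) :
    (kernelForm K).IsNonneg :=
  ⟨hK⟩

section Synthesis

variable {𝕜 ι F G G' : Type*} [RCLike 𝕜] [NormedAddCommGroup F] [InnerProductSpace 𝕜 F]
  [CompleteSpace F] [NormedAddCommGroup G] [InnerProductSpace 𝕜 G] [CompleteSpace G]
  [NormedAddCommGroup G'] [InnerProductSpace 𝕜 G'] [CompleteSpace G']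

noncomputable def synthesis (ρ : ι → G →L[𝕜] F) : (ι →₀ F) →ₗ[𝕜] G :=
  Finsupp.lsum 𝕜 fun n => (adjoint (ρ n)).toLinearMap

theorem inner_synthesis_left (ρ : ι → G →L[𝕜] F) (u : ι →₀ F) (g : G) :
    ⟪synthesis ρ u, g⟫_𝕜 = u.sum fun n a => ⟪a, ρ n g⟫_𝕜 := by
  simp [synthesis, Finsupp.sum_inner, adjoint_inner_left]

theorem apply_synthesis (ρ : ι → G →L[𝕜] F) (n : ι) (u : ι →₀ F) :
    ρ n (synthesis ρ u) = u.sum fun m a => (ρ n ∘L adjoint (ρ m)) a := by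
  simp [synthesis, map_finsuppSum]

theorem denseRange_synthesis {ρ : ι → G →L[𝕜] F} (hρ : ∀ g, (∀ n, ρ n g = 0) → g = 0) :
    DenseRange (synthesis ρ) := by
  rw [DenseRange, ← LinearMap.coe_range, Submodule.dense_iff_topologicalClosure_eq_top,
    Submodule.topologicalClosure_eq_top_iff, Submodule.eq_bot_iff]
  refine fun g hg => hρ g fun n => ext_inner_left 𝕜 fun a => ?_
  have := Submodule.inner_right_of_mem_orthogonal
    (LinearMap.mem_range_self _ (Finsupp.single n a)) hg
  simpa [inner_synthesis_left] using this

theorem norm_synthesis_eq_of_comp_adjoint_eq {ρ : ι → G →L[𝕜] F} {ρ' : ι → G' →L[𝕜] F}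
    (h : ∀ n m, ρ' n ∘L adjoint (ρ' m) = ρ n ∘L adjoint (ρ m)) (u : ι →₀ F) :
    ‖synthesis ρ' u‖ = ‖synthesis ρ u‖ := by
  simp only [norm_eq_sqrt_re_inner (𝕜 := 𝕜), inner_synthesis_left, apply_synthesis, h]

theorem exists_linearIsometryEquiv_of_comp_adjoint_eq {ρ : ι → G →L[𝕜] F}
    {ρ' : ι → G' →L[𝕜] F} (hρ : ∀ g, (∀ n, ρ n g = 0) → g = 0)
    (hρ' : ∀ g, (∀ n, ρ' n g = 0) → g = 0)
    (h : ∀ n m, ρ' n ∘L adjoint (ρ' m) = ρ n ∘L adjoint (ρ m)) :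
    ∃ V : G ≃ₗᵢ[𝕜] G', ∀ n g, ρ' n (V g) = ρ n g := by
  refine ⟨(LinearEquiv.refl 𝕜 (ι →₀ F)).extendOfIsometry (synthesis ρ) (synthesis ρ')
    (denseRange_synthesis hρ) (denseRange_synthesis hρ') fun u => by
      rw [LinearEquiv.refl_apply, norm_synthesis_eq_of_comp_adjoint_eq h], fun n g => ?_⟩
  refine (denseRange_synthesis hρ).induction ?_ (isClosed_eq (by fun_prop) (by fun_prop)) g
  rintro _ ⟨u, rfl⟩
  rw [LinearEquiv.extendOfIsometry_eq, LinearEquiv.refl_apply, apply_synthesis,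
    apply_synthesis]
  simp only [h]

end Synthesis

theorem frkhs_existence_and_uniqueness {d : ℕ} {F : Type u} [NormedAddCommGroup F]
    [InnerProductSpace ℂ F] [CompleteSpace F]
    (K : (Fin d → ℤ) → (Fin d → ℤ) → F →L[ℂ] F) (hK : IsPosKernel K) :
    (∃ (G : Type u) (_ : NormedAddCommGroup G) (_ : InnerProductSpace ℂ G)
        (_ : CompleteSpace G) (ρ : (Fin d → ℤ) → G →L[ℂ] F),
        (∀ g : G, (∀ n, ρ n g = 0) → g = 0) ∧
        ∀ n m, ρ n ∘L adjoint (ρ m) = K n m) ∧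
    (∀ (G G' : Type u) (_ : NormedAddCommGroup G) (_ : InnerProductSpace ℂ G)
        (_ : CompleteSpace G) (_ : NormedAddCommGroup G') (_ : InnerProductSpace ℂ G')
        (_ : CompleteSpace G') (ρ : (Fin d → ℤ) → G →L[ℂ] F)
        (ρ' : (Fin d → ℤ) → G' →L[ℂ] F),
        (∀ g : G, (∀ n, ρ n g = 0) → g = 0) →
        (∀ g : G', (∀ n, ρ' n g = 0) → g = 0) →
        (∀ n m, ρ n ∘L adjoint (ρ m) = K n m) →
        (∀ n m, ρ' n ∘L adjoint (ρ' m) = K n m) →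
        ∃ V : G ≃ₗᵢ[ℂ] G', ∀ n g, ρ' n (V g) = ρ n g) := by
  have : Fact (Matrix.of K).PosSemidef :=
    ⟨posSemidef_of_isNonneg_kernelForm hK.isNonneg_kernelForm⟩
  refine ⟨⟨RKHS.OfKernel (Matrix.of K), inferInstance, inferInstance, inferInstance,
    fun n => adjoint (RKHS.kerFun _ n), fun g hg => RKHS.ext fun n => by simpa using hg n,
    fun n m => ?_⟩, ?_⟩
  · rw [adjoint_adjoint, ← RKHS.kernel_apply, RKHS.OfKernel.kernel_ofKernel, Matrix.of_apply]
  · intro G G' _ _ _ _ _ _ ρ ρ' hρ hρ' hρK hρ'K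
    exact exists_linearIsometryEquiv_of_comp_adjoint_eq hρ hρ' fun n m =>
      (hρ'K n m).trans (hρK n m).symm
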